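/- arXiv:2401.16933 — 2 statements merged into one kernel-verified Lean document; each statement's English description precedes it below -/
import Mathlib

section
/- Set D₀ = Q ∩ P. Then P is the disjoint union of the double cosets D₀·S_ψ and D₀·τ₁·S_ψ; that is, {I₄, τ₁} is a complete set of (D₀, S_ψ)-double coset representatives in P. -/
open Matrix

variable (F : Type*) [Field F]

/-- The standard alternating matrix `J = [[0, I₂], [-I₂, 0]]`. -/
def Jmat : Matrix (Fin 2 ⊕ Fin 2) (Fin 2 ⊕ Fin 2) F := Matrix.fromBlocks 0 1 (-1) 0

/-- The symplectic group `Sp₄(F)`, as a set of matrices. -/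
def Sp4 : Set (Matrix (Fin 2 ⊕ Fin 2) (Fin 2 ⊕ Fin 2) F) :=
  {g | gᵀ * Jmat F * g = Jmat F}

/-- The Siegel parabolic subgroup `P` of `Sp₄(F)`, as a set of matrices. -/
def P4 : Set (Matrix (Fin 2 ⊕ Fin 2) (Fin 2 ⊕ Fin 2) F) :=
  {m | ∃ g X : Matrix (Fin 2) (Fin 2) F,
    IsUnit g ∧ (g⁻¹ * X)ᵀ = g⁻¹ * X ∧ m = Matrix.fromBlocks g X 0 (g⁻¹)ᵀ}

/-- `O₂(F, C) = {[[a, 0], [y, d]] : a² = 1, d ≠ 0, y ∈ F}`. -/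
def O2C : Set (Matrix (Fin 2) (Fin 2) F) :=
  {g | ∃ a d y : F, a ^ 2 = 1 ∧ d ≠ 0 ∧ g = !![a, 0; y, d]}

/-- `S_ψ = {[[g, X], [0, ᵗg⁻¹]] ∈ P : g ∈ O₂(F, C)}`. -/
def Spsi : Set (Matrix (Fin 2 ⊕ Fin 2) (Fin 2 ⊕ Fin 2) F) :=
  {m | ∃ g X : Matrix (Fin 2) (Fin 2) F,
    g ∈ O2C F ∧ IsUnit g ∧ (g⁻¹ * X)ᵀ = g⁻¹ * X ∧ m = Matrix.fromBlocks g X 0 (g⁻¹)ᵀ}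

/-- `σ₁ = [[0,0,-1,0],[0,1,0,0],[1,0,0,0],[0,0,0,1]]`. -/
def sig1 : Matrix (Fin 2 ⊕ Fin 2) (Fin 2 ⊕ Fin 2) F :=
  Matrix.fromBlocks !![0, 0; 0, 1] !![-1, 0; 0, 0] !![1, 0; 0, 0] !![0, 0; 0, 1]

/-- `σ₂ = [[0, -I₂], [I₂, 0]]`. -/
def sig2 : Matrix (Fin 2 ⊕ Fin 2) (Fin 2 ⊕ Fin 2) F := Matrix.fromBlocks 0 (-1) 1 0

/-- `τ₁ = diag(h₁, h₁)` with `h₁ = [[0,1],[1,0]]`. -/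
def tau1 : Matrix (Fin 2 ⊕ Fin 2) (Fin 2 ⊕ Fin 2) F :=
  Matrix.fromBlocks !![0, 1; 1, 0] 0 0 !![0, 1; 1, 0]

/-- Double coset `A · w · B`. -/
def DC {α : Type*} [Mul α] (A : Set α) (w : α) (B : Set α) : Set α :=
  {x | ∃ a ∈ A, ∃ b ∈ B, x = a * w * b}

/-- The Klingen parabolic subgroup `Q`: the stabilizer in `Sp₄(F)` of the line `F·e₁`. -/
def Qkl : Set (Matrix (Fin 2 ⊕ Fin 2) (Fin 2 ⊕ Fin 2) F) :=
  {m | m ∈ Sp4 F ∧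
    Submodule.map (Matrix.mulVecLin m)
      (Submodule.span F {Pi.single (Sum.inl 0) 1}) =
    Submodule.span F {(Pi.single (Sum.inl 0) 1 : (Fin 2 ⊕ Fin 2) → F)}}

/-- `D₀ = Q ∩ P`. -/
def D0 : Set (Matrix (Fin 2 ⊕ Fin 2) (Fin 2 ⊕ Fin 2) F) := Qkl F ∩ P4 F

/-!
The top-left block `g` of an element of `P` determines its double coset. Left multiplication by
`D₀` multiplies `g` on the left by an upper triangular matrix, and right multiplication by `S_ψ`
multiplies it on the right by a lower triangular one, so the bottom-right entry `g₁₁` is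
multiplied by units when the representative is `1` and stays `0` when it is
`τ₁ = diag(h₁, ᵗh₁⁻¹)`. Conversely, `g = [[det g / g₁₁, g₀₁ / g₁₁], [0, 1]] · [[1, 0], [g₁₀, g₁₁]]`
when `g₁₁ ≠ 0` and `g = [[g₀₁, g₀₀], [0, g₁₀]] · h₁` when `g₁₁ = 0`, while the unipotent part
of `P` is absorbed into `S_ψ`.
-/

section General

variable {R n : Type*} [CommRing R] [Fintype n] [DecidableEq n]

theorem fromBlocks_zero₂₁_mul_fromBlocks_zero₂₁ (A B D A' B' D' : Matrix n n R) :
    fromBlocks A B 0 D * fromBlocks A' B' 0 D'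
      = fromBlocks (A * A') (A * B' + B * D') 0 (D * D') := by
  simp [fromBlocks_multiply]

/-- The Levi component `diag(g, ᵗg⁻¹)` of the Siegel parabolic. -/
noncomputable def levi (g : Matrix n n R) : Matrix (n ⊕ n) (n ⊕ n) R :=
  fromBlocks g 0 0 (g⁻¹)ᵀ

theorem levi_one : levi (1 : Matrix n n R) = 1 := by
  simp [levi]

theorem levi_mul (g h : Matrix n n R) : levi (g * h) = levi g * levi h := by
  simp [levi, fromBlocks_zero₂₁_mul_fromBlocks_zero₂₁, Matrix.mul_inv_rev]

theorem levi_mul_fromBlocks (k s Z : Matrix n n R) :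
    levi k * fromBlocks s Z 0 (s⁻¹)ᵀ = fromBlocks (k * s) (k * Z) 0 ((k * s)⁻¹)ᵀ := by
  simp [levi, fromBlocks_zero₂₁_mul_fromBlocks_zero₂₁, Matrix.mul_inv_rev]

theorem isUnit_of_det_ne_zero {K : Type*} [Field K] {g : Matrix n n K} (h : g.det ≠ 0) :
    IsUnit g :=
  (Matrix.isUnit_iff_isUnit_det g).2 h.isUnit

end General

section GL2

variable {F}

def borelGL2 : Set (Matrix (Fin 2) (Fin 2) F) := {b | IsUnit b ∧ b 1 0 = 0}

/-- The matrix `h₁`. -/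
def swapMat : Matrix (Fin 2) (Fin 2) F := !![0, 1; 1, 0]

theorem swapMat_mul_swapMat : swapMat * swapMat = (1 : Matrix (Fin 2) (Fin 2) F) := by
  ext i j
  fin_cases i <;> fin_cases j <;> simp [swapMat]

theorem isUnit_swapMat : IsUnit (swapMat : Matrix (Fin 2) (Fin 2) F) :=
  IsUnit.of_mul_eq_one _ swapMat_mul_swapMat

theorem tau1_eq_levi_swapMat : tau1 F = levi swapMat := by
  have hT : (swapMat : Matrix (Fin 2) (Fin 2) F)ᵀ = swapMat := by
    ext i j
    fin_cases i <;> fin_cases j <;> rfl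
  rw [levi, Matrix.inv_eq_right_inv swapMat_mul_swapMat, hT, tau1, swapMat]

theorem diag_ne_zero_of_mem_borelGL2 {b : Matrix (Fin 2) (Fin 2) F} (hb : b ∈ borelGL2) :
    b 0 0 ≠ 0 ∧ b 1 1 ≠ 0 := by
  have hdet : b.det ≠ 0 := ((Matrix.isUnit_iff_isUnit_det b).1 hb.1).ne_zero
  rw [Matrix.det_fin_two, hb.2, mul_zero, sub_zero] at hdet
  exact ⟨left_ne_zero_of_mul hdet, right_ne_zero_of_mul hdet⟩

theorem isUnit_of_mem_O2C {s : Matrix (Fin 2) (Fin 2) F} (hs : s ∈ O2C F) : IsUnit s := by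
  obtain ⟨a, d, y, ha, hd, rfl⟩ := hs
  have ha0 : a ≠ 0 := by rintro rfl; simp at ha
  exact isUnit_of_det_ne_zero (by simpa [Matrix.det_fin_two_of] using ⟨ha0, hd⟩)

theorem one_mem_O2C : (1 : Matrix (Fin 2) (Fin 2) F) ∈ O2C F :=
  ⟨1, 1, 0, one_pow 2, one_ne_zero, Matrix.one_fin_two⟩

theorem mem_DC_borelGL2_one_iff (g : Matrix (Fin 2) (Fin 2) F) :
    g ∈ DC borelGL2 1 (O2C F) ↔ IsUnit g ∧ g 1 1 ≠ 0 := by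
  constructor
  · rintro ⟨b, hb, s, hs, rfl⟩
    refine ⟨(hb.1.mul isUnit_one).mul (isUnit_of_mem_O2C hs), ?_⟩
    obtain ⟨a, d, y, -, hd, rfl⟩ := hs
    have h11 : (b * 1 * !![a, 0; y, d] : Matrix (Fin 2) (Fin 2) F) 1 1 = b 1 1 * d := by
      simp [Matrix.mul_apply, Fin.sum_univ_two, hb.2]
    rw [h11]
    exact mul_ne_zero (diag_ne_zero_of_mem_borelGL2 hb).2 hd
  · rintro ⟨hg, h11⟩
    have hdet : g.det ≠ 0 := ((Matrix.isUnit_iff_isUnit_det g).1 hg).ne_zero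
    refine ⟨!![g.det / g 1 1, g 0 1 / g 1 1; 0, 1],
      ⟨isUnit_of_det_ne_zero (by simpa [Matrix.det_fin_two_of] using ⟨hdet, h11⟩), rfl⟩,
      !![1, 0; g 1 0, g 1 1], ⟨1, g 1 1, g 1 0, one_pow 2, h11, rfl⟩, ?_⟩
    ext i j
    fin_cases i <;> fin_cases j <;> simp [Matrix.mul_apply, Fin.sum_univ_two]
    · field_simp
      rw [Matrix.det_fin_two]; ring
    · field_simp

theorem mem_DC_borelGL2_swapMat_iff (g : Matrix (Fin 2) (Fin 2) F) :
    g ∈ DC borelGL2 swapMat (O2C F) ↔ IsUnit g ∧ g 1 1 = 0 := by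
  constructor
  · rintro ⟨b, hb, s, hs, rfl⟩
    refine ⟨(hb.1.mul isUnit_swapMat).mul (isUnit_of_mem_O2C hs), ?_⟩
    obtain ⟨a, d, y, -, -, rfl⟩ := hs
    simp [swapMat, Matrix.mul_apply, Fin.sum_univ_two, hb.2]
  · rintro ⟨hg, h11⟩
    have hdet : g.det ≠ 0 := ((Matrix.isUnit_iff_isUnit_det g).1 hg).ne_zero
    rw [Matrix.det_fin_two, h11, mul_zero, zero_sub, neg_ne_zero] at hdet
    refine ⟨!![g 0 1, g 0 0; 0, g 1 0],
      ⟨isUnit_of_det_ne_zero (by simpa [Matrix.det_fin_two_of] using hdet), rfl⟩,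
      1, one_mem_O2C, ?_⟩
    ext i j
    fin_cases i <;> fin_cases j <;> simp [swapMat, Matrix.mul_apply, Fin.sum_univ_two, h11]

end GL2

section Siegel

variable {F}

theorem levi_mem_P4 {g : Matrix (Fin 2) (Fin 2) F} (hg : IsUnit g) : levi g ∈ P4 F :=
  ⟨g, 0, hg, by simp, rfl⟩

theorem P4_mul {m m' : Matrix (Fin 2 ⊕ Fin 2) (Fin 2 ⊕ Fin 2) F}
    (hm : m ∈ P4 F) (hm' : m' ∈ P4 F) : m * m' ∈ P4 F := by
  obtain ⟨g, X, hg, hX, rfl⟩ := hm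
  obtain ⟨g', X', hg', hX', rfl⟩ := hm'
  refine ⟨g * g', g * X' + X * (g'⁻¹)ᵀ, hg.mul hg', ?_, ?_⟩
  · have key : (g * g')⁻¹ * (g * X' + X * (g'⁻¹)ᵀ)
        = g'⁻¹ * X' + g'⁻¹ * (g⁻¹ * X) * (g'⁻¹)ᵀ := by
      rw [Matrix.mul_inv_rev, mul_add, mul_assoc, Matrix.nonsing_inv_mul_cancel_left _ _
        ((Matrix.isUnit_iff_isUnit_det g).1 hg)]
      simp only [mul_assoc]
    rw [key, transpose_add, hX', transpose_mul, transpose_mul, transpose_transpose, hX]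
    simp only [mul_assoc]
  · rw [fromBlocks_zero₂₁_mul_fromBlocks_zero₂₁, Matrix.mul_inv_rev, transpose_mul]

theorem isUnit_toBlocks₁₁_of_mem_P4 {m : Matrix (Fin 2 ⊕ Fin 2) (Fin 2 ⊕ Fin 2) F}
    (hm : m ∈ P4 F) : IsUnit m.toBlocks₁₁ := by
  obtain ⟨g, X, hg, -, rfl⟩ := hm
  simpa using hg

theorem levi_mem_Sp4 {g : Matrix (Fin 2) (Fin 2) F} (hg : IsUnit g) : levi g ∈ Sp4 F := by
  have hdet := (Matrix.isUnit_iff_isUnit_det g).1 hg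
  have h₁ : gᵀ * (g⁻¹)ᵀ = 1 := by
    rw [← transpose_mul, Matrix.nonsing_inv_mul _ hdet, transpose_one]
  show _ = _
  simp [levi, Jmat, fromBlocks_transpose, fromBlocks_multiply, h₁,
    Matrix.nonsing_inv_mul _ hdet]

theorem levi_mem_D0 {b : Matrix (Fin 2) (Fin 2) F} (hb : b ∈ borelGL2) : levi b ∈ D0 F := by
  refine ⟨⟨levi_mem_Sp4 hb.1, ?_⟩, levi_mem_P4 hb.1⟩
  have he₁ : (levi b).mulVecLin (Pi.single (Sum.inl 0) 1)
      = b 0 0 • (Pi.single (Sum.inl 0) 1 : (Fin 2 ⊕ Fin 2) → F) := by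
    funext i
    rw [Matrix.mulVecLin_apply, Matrix.mulVec_single]
    rcases i with i | i <;> fin_cases i <;> simp [levi, hb.2]
  rw [Submodule.map_span, Set.image_singleton, he₁,
    Submodule.span_singleton_smul_eq (diag_ne_zero_of_mem_borelGL2 hb).1.isUnit]

theorem exists_eq_fromBlocks_of_mem_D0 {m : Matrix (Fin 2 ⊕ Fin 2) (Fin 2 ⊕ Fin 2) F}
    (hm : m ∈ D0 F) : ∃ b ∈ borelGL2, ∃ X, m = fromBlocks b X 0 (b⁻¹)ᵀ := by
  obtain ⟨⟨-, hspan⟩, b, X, hb, -, rfl⟩ := hm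
  have he₁ : (fromBlocks b X 0 (b⁻¹)ᵀ).mulVecLin (Pi.single (Sum.inl 0) 1)
      ∈ Submodule.span F {(Pi.single (Sum.inl 0) 1 : (Fin 2 ⊕ Fin 2) → F)} := by
    rw [← hspan]
    exact Submodule.mem_map_of_mem (Submodule.mem_span_singleton_self _)
  obtain ⟨c, hc⟩ := Submodule.mem_span_singleton.mp he₁
  have h10 : b 1 0 = 0 := by
    simpa [Matrix.mulVecLin_apply, Matrix.mulVec_single] using (congrFun hc (Sum.inl 1)).symm
  exact ⟨b, ⟨hb, h10⟩, X, rfl⟩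

theorem mem_DC_D0_levi_Spsi_iff {w : Matrix (Fin 2) (Fin 2) F} (hw : IsUnit w)
    (m : Matrix (Fin 2 ⊕ Fin 2) (Fin 2 ⊕ Fin 2) F) :
    m ∈ DC (D0 F) (levi w) (Spsi F) ↔ m ∈ P4 F ∧ m.toBlocks₁₁ ∈ DC borelGL2 w (O2C F) := by
  constructor
  · rintro ⟨a, ha, _, ⟨s, Y, hs, hsU, hY, rfl⟩, rfl⟩
    refine ⟨P4_mul (P4_mul ha.2 (levi_mem_P4 hw)) ⟨s, Y, hsU, hY, rfl⟩, ?_⟩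
    obtain ⟨b, hb, X, rfl⟩ := exists_eq_fromBlocks_of_mem_D0 ha
    exact ⟨b, hb, s, hs, by simp [levi, fromBlocks_zero₂₁_mul_fromBlocks_zero₂₁]⟩
  · rintro ⟨⟨g, X, hg, hX, rfl⟩, b, hb, s, hs, hgbws⟩
    rw [toBlocks_fromBlocks₁₁] at hgbws
    have hsdet := (Matrix.isUnit_iff_isUnit_det s).1 (isUnit_of_mem_O2C hs)
    refine ⟨levi b, levi_mem_D0 hb, fromBlocks s (s * (g⁻¹ * X)) 0 (s⁻¹)ᵀ,
      ⟨s, _, hs, isUnit_of_mem_O2C hs, ?_, rfl⟩, ?_⟩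
    · rwa [Matrix.nonsing_inv_mul_cancel_left _ _ hsdet]
    · rw [← levi_mul, levi_mul_fromBlocks, ← mul_assoc, ← hgbws,
        Matrix.mul_nonsing_inv_cancel_left _ _ ((Matrix.isUnit_iff_isUnit_det g).1 hg)]

end Siegel

theorem D0_Spsi_double_cosets :
    (P4 F = DC (D0 F) 1 (Spsi F) ∪ DC (D0 F) (tau1 F) (Spsi F)) ∧
    Disjoint (DC (D0 F) 1 (Spsi F)) (DC (D0 F) (tau1 F) (Spsi F)) := by
  have hone : DC (D0 F) 1 (Spsi F) = {m ∈ P4 F | m.toBlocks₁₁ 1 1 ≠ 0} := by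
    ext m
    rw [← levi_one, mem_DC_D0_levi_Spsi_iff isUnit_one, mem_DC_borelGL2_one_iff]
    exact ⟨fun h => ⟨h.1, h.2.2⟩, fun h => ⟨h.1, isUnit_toBlocks₁₁_of_mem_P4 h.1, h.2⟩⟩
  have htau : DC (D0 F) (tau1 F) (Spsi F) = {m ∈ P4 F | m.toBlocks₁₁ 1 1 = 0} := by
    ext m
    rw [tau1_eq_levi_swapMat, mem_DC_D0_levi_Spsi_iff isUnit_swapMat,
      mem_DC_borelGL2_swapMat_iff]
    exact ⟨fun h => ⟨h.1, h.2.2⟩, fun h => ⟨h.1, isUnit_toBlocks₁₁_of_mem_P4 h.1, h.2⟩⟩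
  rw [hone, htau, ← Set.sep_or]
  refine ⟨?_, Set.disjoint_left.2 fun m h h' => h.2 h'.2⟩
  simp [em']
end

section
/- Set D₁ = σ₁ Q σ₁⁻¹ ∩ P. Then P is the disjoint union of the double cosets D₁·S_ψ and D₁·τ₁·S_ψ; that is, {I₄, τ₁} is a complete set of (D₁, S_ψ)-double coset representatives in P. -/
open Matrix

variable (F : Type*) [Field F]

/-- `D₁ = σ₁ Q σ₁⁻¹ ∩ P`. -/
def D1 : Set (Matrix (Fin 2 ⊕ Fin 2) (Fin 2 ⊕ Fin 2) F) :=
  {m | ∃ q ∈ Qkl F, m = sig1 F * q * (sig1 F)⁻¹} ∩ P4 F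

/-! ### Auxiliary lemmas -/

section Aux

/-- Explicit inverse of `σ₁`. -/
def sig1i : Matrix (Fin 2 ⊕ Fin 2) (Fin 2 ⊕ Fin 2) F :=
  Matrix.fromBlocks !![0, 0; 0, 1] !![1, 0; 0, 0] !![-1, 0; 0, 0] !![0, 0; 0, 1]

lemma sig1_mul_sig1i : sig1 F * sig1i F = 1 := by
  rw [sig1, sig1i, Matrix.fromBlocks_multiply, ← Matrix.fromBlocks_one]
  congr 1 <;> try congr 1
  all_goals (ext i j; fin_cases i <;> fin_cases j <;>
    simp [Matrix.mul_apply, Fin.sum_univ_two, Matrix.one_apply, Matrix.vecHead, Matrix.vecTail])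

lemma sig1i_mul_sig1 : sig1i F * sig1 F = 1 := by
  rw [sig1, sig1i, Matrix.fromBlocks_multiply, ← Matrix.fromBlocks_one]
  congr 1 <;> try congr 1
  all_goals (ext i j; fin_cases i <;> fin_cases j <;>
    simp [Matrix.mul_apply, Fin.sum_univ_two, Matrix.one_apply, Matrix.vecHead, Matrix.vecTail])

lemma sig1_inv : (sig1 F)⁻¹ = sig1i F := Matrix.inv_eq_right_inv (sig1_mul_sig1i F)

lemma sig1_sp : (sig1 F)ᵀ * Jmat F * sig1 F = Jmat F := by
  rw [sig1, Jmat, Matrix.fromBlocks_transpose, Matrix.fromBlocks_multiply,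
    Matrix.fromBlocks_multiply]
  congr 1 <;> try congr 1
  all_goals (ext i j; fin_cases i <;> fin_cases j <;>
    simp [Matrix.mul_apply, Fin.sum_univ_two, Matrix.one_apply, Matrix.vecHead, Matrix.vecTail])

lemma sig1i_sp : (sig1i F)ᵀ * Jmat F * sig1i F = Jmat F := by
  rw [sig1i, Jmat, Matrix.fromBlocks_transpose, Matrix.fromBlocks_multiply,
    Matrix.fromBlocks_multiply]
  congr 1 <;> try congr 1
  all_goals (ext i j; fin_cases i <;> fin_cases j <;>
    simp [Matrix.mul_apply, Fin.sum_univ_two, Matrix.one_apply, Matrix.vecHead, Matrix.vecTail])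

lemma sig1_mulVec_e1 :
    (sig1 F) *ᵥ (Pi.single (Sum.inl 0) 1 : (Fin 2 ⊕ Fin 2) → F) =
      Pi.single (Sum.inr 0) 1 := by
  rw [Matrix.mulVec_single]
  ext i
  rcases i with i | i <;> fin_cases i <;>
    simp [sig1, Pi.single_apply, Matrix.fromBlocks]

lemma sig1i_mulVec_e3 :
    (sig1i F) *ᵥ (Pi.single (Sum.inr 0) 1 : (Fin 2 ⊕ Fin 2) → F) =
      Pi.single (Sum.inl 0) 1 := by
  rw [Matrix.mulVec_single]
  ext i
  rcases i with i | i <;> fin_cases i <;>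
    simp [sig1i, Pi.single_apply, Matrix.fromBlocks]

/-- Every element of `P4` is symplectic. -/
lemma P4_subset_Sp4 : P4 F ⊆ Sp4 F := by
  rintro m ⟨g, X, hg, hX, rfl⟩
  have hdet : IsUnit g.det := (Matrix.isUnit_iff_isUnit_det g).mp hg
  have h1 : g⁻¹ * g = 1 := Matrix.nonsing_inv_mul g hdet
  show _ = Jmat F
  rw [Jmat, Matrix.fromBlocks_transpose, Matrix.fromBlocks_multiply,
    Matrix.fromBlocks_multiply]
  have e1 : gᵀ * (g⁻¹)ᵀ = 1 := by
    rw [← Matrix.transpose_mul, h1, Matrix.transpose_one]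
  have e2 : ((g⁻¹)ᵀ)ᵀ * g = 1 := by rw [Matrix.transpose_transpose, h1]
  have e3 : Xᵀ * (g⁻¹)ᵀ = g⁻¹ * X := by
    rw [← Matrix.transpose_mul, hX]
  rw [Matrix.fromBlocks_inj]
  refine ⟨by simp, by simpa using e1, by simpa using e2, by simp [e3]⟩

/-- `P4` is closed under multiplication. -/
lemma P4_mul_s13 {m₁ m₂ : Matrix (Fin 2 ⊕ Fin 2) (Fin 2 ⊕ Fin 2) F}
    (h₁ : m₁ ∈ P4 F) (h₂ : m₂ ∈ P4 F) : m₁ * m₂ ∈ P4 F := by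
  obtain ⟨g, X, hg, hX, rfl⟩ := h₁
  obtain ⟨g', X', hg', hX', rfl⟩ := h₂
  refine ⟨g * g', g * X' + X * (g'⁻¹)ᵀ, hg.mul hg', ?_, ?_⟩
  · have hinv : (g * g')⁻¹ = g'⁻¹ * g⁻¹ := Matrix.mul_inv_rev g g'
    have hgd : IsUnit g.det := (Matrix.isUnit_iff_isUnit_det g).mp hg
    have key : (g * g')⁻¹ * (g * X' + X * (g'⁻¹)ᵀ) =
        g'⁻¹ * X' + g'⁻¹ * (g⁻¹ * X) * (g'⁻¹)ᵀ := by
      rw [hinv, Matrix.mul_add, mul_assoc g'⁻¹ g⁻¹ (g * X'), ← mul_assoc g⁻¹ g X',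
        Matrix.nonsing_inv_mul g hgd, Matrix.one_mul]
      simp only [mul_assoc]
    rw [key, Matrix.transpose_add, hX']
    congr 1
    rw [Matrix.transpose_mul, Matrix.transpose_mul, Matrix.transpose_transpose, hX]
    simp only [mul_assoc]
  · rw [Matrix.fromBlocks_multiply, Matrix.fromBlocks_inj]
    refine ⟨by simp, by simp, by simp, ?_⟩
    rw [Matrix.mul_inv_rev, Matrix.transpose_mul]
    simp
  
lemma tau1_mem_P4 : tau1 F ∈ P4 F := by
  have h1 : (!![0, 1; 1, 0] : Matrix (Fin 2) (Fin 2) F) * !![0, 1; 1, 0] = 1 := by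
    ext i j; fin_cases i <;> fin_cases j <;>
      simp [Matrix.mul_apply, Fin.sum_univ_two, Matrix.one_apply]
  have hinv : (!![0, 1; 1, 0] : Matrix (Fin 2) (Fin 2) F)⁻¹ = !![0, 1; 1, 0] :=
    Matrix.inv_eq_right_inv h1
  have hu : IsUnit (!![0, 1; 1, 0] : Matrix (Fin 2) (Fin 2) F) := by
    rw [Matrix.isUnit_iff_isUnit_det]
    have : (!![0, 1; 1, 0] : Matrix (Fin 2) (Fin 2) F).det = -1 := by
      simp [Matrix.det_fin_two_of]
    rw [this]; exact isUnit_one.neg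
  refine ⟨!![0, 1; 1, 0], 0, hu, by simp, ?_⟩
  rw [tau1, hinv]
  congr 1
  ext i j; fin_cases i <;> fin_cases j <;> rfl

lemma Spsi_subset_P4 : Spsi F ⊆ P4 F := by
  rintro m ⟨g, X, _, hg, hX, rfl⟩
  exact ⟨g, X, hg, hX, rfl⟩

/-- Membership in `D1` for block-diagonal matrices with lower-triangular block. -/
lemma mem_D1_of_lower {w : Matrix (Fin 2) (Fin 2) F} (hw : IsUnit w) (h01 : w 0 1 = 0) :
    Matrix.fromBlocks w 0 0 (w⁻¹)ᵀ ∈ D1 F := by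
  set d : Matrix (Fin 2 ⊕ Fin 2) (Fin 2 ⊕ Fin 2) F := Matrix.fromBlocks w 0 0 (w⁻¹)ᵀ with hd
  have hdP : d ∈ P4 F := ⟨w, 0, hw, by simp, by simp [hd]⟩
  have hdet : IsUnit w.det := (Matrix.isUnit_iff_isUnit_det w).mp hw
  have hw11 : w 1 1 ≠ 0 := by
    intro h
    rw [Matrix.det_fin_two, h01, h] at hdet
    simp at hdet
  have hwi01 : w⁻¹ 0 1 = 0 := by
    have h := Matrix.nonsing_inv_mul w hdet
    have h2 := congrFun (congrFun h 0) 1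
    simp [Matrix.mul_apply, Fin.sum_univ_two, Matrix.one_apply, h01] at h2
    rcases h2 with h2 | h2
    · exact h2
    · exact absurd h2 hw11
  have hwidet : w⁻¹.det ≠ 0 := by
    have h := Matrix.nonsing_inv_mul w hdet
    have := congrArg Matrix.det h
    rw [Matrix.det_mul, Matrix.det_one] at this
    intro hz; rw [hz, zero_mul] at this; exact zero_ne_one this
  have hwi00 : w⁻¹ 0 0 ≠ 0 := by
    intro h
    rw [Matrix.det_fin_two, h, hwi01] at hwidet
    simp at hwidet
  refine ⟨⟨sig1i F * d * sig1 F, ⟨?_, ?_⟩, ?_⟩, hdP⟩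
  · -- symplectic
    show _ = Jmat F
    have hdsp : dᵀ * Jmat F * d = Jmat F := P4_subset_Sp4 F hdP
    calc (sig1i F * d * sig1 F)ᵀ * Jmat F * (sig1i F * d * sig1 F)
        = (sig1 F)ᵀ * (dᵀ * ((sig1i F)ᵀ * Jmat F * sig1i F) * d) * sig1 F := by
          simp only [Matrix.transpose_mul, mul_assoc]
      _ = Jmat F := by rw [sig1i_sp, hdsp, sig1_sp]
  · -- stabilizes the line
    rw [Submodule.map_span, Set.image_singleton]
    have hvec : (sig1i F * d * sig1 F).mulVecLin (Pi.single (Sum.inl 0) 1) =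
        (w⁻¹ 0 0) • (Pi.single (Sum.inl 0) 1 : (Fin 2 ⊕ Fin 2) → F) := by
      rw [Matrix.mulVecLin_apply, ← Matrix.mulVec_mulVec, ← Matrix.mulVec_mulVec,
        sig1_mulVec_e1]
      have hde3 : d *ᵥ (Pi.single (Sum.inr 0) 1 : (Fin 2 ⊕ Fin 2) → F) =
          (w⁻¹ 0 0) • (Pi.single (Sum.inr 0) 1 : (Fin 2 ⊕ Fin 2) → F) := by
        rw [Matrix.mulVec_single]
        ext i
        rcases i with i | i <;> fin_cases i <;>
          simp [hd, Pi.single_apply, Matrix.fromBlocks, hwi01]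
      rw [hde3, Matrix.mulVec_smul, sig1i_mulVec_e3]
    rw [hvec]
    exact Submodule.span_singleton_smul_eq (isUnit_iff_ne_zero.mpr hwi00) _
  · -- m = sig1 * q * sig1⁻¹
    rw [sig1_inv]
    calc d = (sig1 F * sig1i F) * d * (sig1 F * sig1i F) := by
            rw [sig1_mul_sig1i]; simp
      _ = sig1 F * (sig1i F * d * sig1 F) * sig1i F := by
            simp only [mul_assoc]

/-- Forward characterization of `D1`: the `GL₂`-part is lower triangular. -/
lemma D1_elim {m : Matrix (Fin 2 ⊕ Fin 2) (Fin 2 ⊕ Fin 2) F} (hm : m ∈ D1 F) :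
    ∃ g X : Matrix (Fin 2) (Fin 2) F,
      IsUnit g ∧ (g⁻¹ * X)ᵀ = g⁻¹ * X ∧ m = Matrix.fromBlocks g X 0 (g⁻¹)ᵀ ∧
      g 0 1 = 0 := by
  obtain ⟨⟨q, ⟨hqsp, hqst⟩, hmq⟩, g, X, hg, hX, hmP⟩ := hm
  refine ⟨g, X, hg, hX, hmP, ?_⟩
  -- m stabilizes e₃
  have he1 : q *ᵥ (Pi.single (Sum.inl 0) 1 : (Fin 2 ⊕ Fin 2) → F) ∈
      Submodule.span F {(Pi.single (Sum.inl 0) 1 : (Fin 2 ⊕ Fin 2) → F)} := by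
    rw [← hqst]
    exact ⟨Pi.single (Sum.inl 0) 1, Submodule.mem_span_singleton_self _,
      by rw [Matrix.mulVecLin_apply]⟩
  obtain ⟨c, hc⟩ := Submodule.mem_span_singleton.mp he1
  have hme3 : m *ᵥ (Pi.single (Sum.inr 0) 1 : (Fin 2 ⊕ Fin 2) → F) =
      c • (Pi.single (Sum.inr 0) 1 : (Fin 2 ⊕ Fin 2) → F) := by
    rw [hmq, sig1_inv, ← Matrix.mulVec_mulVec, ← Matrix.mulVec_mulVec,
      sig1i_mulVec_e3, ← hc, Matrix.mulVec_smul, sig1_mulVec_e1]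
  -- entry (inr 1, inr 0) of m vanishes
  have hent : m (Sum.inr 1) (Sum.inr 0) = 0 := by
    have := congrFun hme3 (Sum.inr 1)
    rw [Matrix.mulVec_single] at this
    simpa [Pi.single_apply] using this
  have hgi01 : g⁻¹ 0 1 = 0 := by
    rw [hmP] at hent
    simpa [Matrix.fromBlocks] using hent
  -- deduce g 0 1 = 0
  have hdet : IsUnit g.det := (Matrix.isUnit_iff_isUnit_det g).mp hg
  have hgidet : g⁻¹.det ≠ 0 := by
    have h := Matrix.nonsing_inv_mul g hdet
    have := congrArg Matrix.det h
    rw [Matrix.det_mul, Matrix.det_one] at this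
    intro hz; rw [hz, zero_mul] at this; exact zero_ne_one this
  have hgi11 : g⁻¹ 1 1 ≠ 0 := by
    intro h
    rw [Matrix.det_fin_two, hgi01, h] at hgidet
    simp at hgidet
  have h := Matrix.mul_nonsing_inv g hdet
  have h2 := congrFun (congrFun h 0) 1
  simp [Matrix.mul_apply, Fin.sum_univ_two, Matrix.one_apply, hgi01] at h2
  rcases h2 with h2 | h2
  · exact h2
  · exact absurd h2 hgi11

end Aux

/-- `{I₄, τ₁}` is a complete set of `(D₁, S_ψ)`-double coset
representatives in `P`. -/
theorem D1_Spsi_double_cosets (h2 : (2 : F) ≠ 0) :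
    (P4 F = DC (D1 F) 1 (Spsi F) ∪ DC (D1 F) (tau1 F) (Spsi F)) ∧
    Disjoint (DC (D1 F) 1 (Spsi F)) (DC (D1 F) (tau1 F) (Spsi F)) := by
  constructor
  · apply Set.Subset.antisymm
    · -- P4 ⊆ union of double cosets
      rintro m ⟨g, X, hg, hX, rfl⟩
      have hdet : IsUnit g.det := (Matrix.isUnit_iff_isUnit_det g).mp hg
      have hdet0 : g.det ≠ 0 := hdet.ne_zero
      have hgg : g * g⁻¹ = 1 := Matrix.mul_nonsing_inv g hdet
      by_cases h01 : g 0 1 = 0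
      · -- first coset
        left
        refine ⟨Matrix.fromBlocks g 0 0 (g⁻¹)ᵀ, mem_D1_of_lower F hg h01,
          Matrix.fromBlocks 1 (g⁻¹ * X) 0 1, ?_, ?_⟩
        · refine ⟨1, g⁻¹ * X, ⟨1, 1, 0, by norm_num, one_ne_zero, ?_⟩, isUnit_one, ?_, ?_⟩
          · ext i j; fin_cases i <;> fin_cases j <;> simp [Matrix.one_apply]
          · simp [hX]
          · simp
        · rw [mul_one, Matrix.fromBlocks_multiply, Matrix.fromBlocks_inj]
          refine ⟨by simp, ?_, by simp, by simp⟩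
          rw [Matrix.zero_mul, add_zero, ← mul_assoc, hgg, Matrix.one_mul]
      · -- second coset
        right
        set p := g 0 0; set q := g 0 1; set r := g 1 0; set s := g 1 1
        set δ : F := (q * r - p * s) / q with hδ
        set l : Matrix (Fin 2) (Fin 2) F := !![q, 0; s, δ] with hl
        set k : Matrix (Fin 2) (Fin 2) F := !![1, 0; p / q, 1] with hk
        have hldet : l.det ≠ 0 := by
          rw [hl, Matrix.det_fin_two_of]
          field_simp [hδ]
          rw [Matrix.det_fin_two] at hdet0
          intro h; apply hdet0
          have hq : g 0 1 * (g 0 1)⁻¹ = 1 := mul_inv_cancel₀ h01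
          linear_combination -h + (g 0 1 * g 1 0 - g 0 0 * g 1 1) * hq
        have hlu : IsUnit l := (Matrix.isUnit_iff_isUnit_det l).mpr
          (isUnit_iff_ne_zero.mpr hldet)
        have hkdet : k.det ≠ 0 := by
          rw [hk, Matrix.det_fin_two_of]; simp
        have hku : IsUnit k := (Matrix.isUnit_iff_isUnit_det k).mpr
          (isUnit_iff_ne_zero.mpr hkdet)
        have hkk : k⁻¹ * k = 1 := Matrix.nonsing_inv_mul k
          ((Matrix.isUnit_iff_isUnit_det k).mp hku)
        have hh1 : (!![0, 1; 1, 0] : Matrix (Fin 2) (Fin 2) F) * !![0, 1; 1, 0] = 1 := by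
          ext i j; fin_cases i <;> fin_cases j <;>
            simp [Matrix.mul_apply, Fin.sum_univ_two, Matrix.one_apply]
        have hh1inv : (!![0, 1; 1, 0] : Matrix (Fin 2) (Fin 2) F)⁻¹ = !![0, 1; 1, 0] :=
          Matrix.inv_eq_right_inv hh1
        have hlhk : l * !![0, 1; 1, 0] * k = g := by
          ext i j
          fin_cases i <;> fin_cases j <;>
            (simp [hl, hk, Matrix.mul_apply, Fin.sum_univ_two]; try field_simp [hδ]) <;>
            ring
          all_goals (rw [hδ, div_mul_cancel₀ _ h01]; ring)
        refine ⟨Matrix.fromBlocks l 0 0 (l⁻¹)ᵀ, mem_D1_of_lower F hlu (by rw [hl]; norm_num),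
          Matrix.fromBlocks k (k * (g⁻¹ * X)) 0 (k⁻¹)ᵀ, ?_, ?_⟩
        · refine ⟨k, k * (g⁻¹ * X), ⟨1, 1, p / q, by norm_num, one_ne_zero, by rw [hk]⟩,
            hku, ?_, rfl⟩
          rw [← mul_assoc, hkk, Matrix.one_mul, hX]
        · rw [tau1, Matrix.fromBlocks_multiply, Matrix.fromBlocks_multiply,
            Matrix.fromBlocks_inj]
          refine ⟨?_, ?_, by simp, ?_⟩
          · simpa using hlhk.symm
          · -- X block
            simp only [Matrix.mul_zero, Matrix.zero_mul, add_zero, zero_add]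
            calc X = (l * !![0, 1; 1, 0] * k) * (g⁻¹ * X) := by
                  rw [hlhk, ← mul_assoc, hgg, Matrix.one_mul]
              _ = l * !![0, 1; 1, 0] * (k * (g⁻¹ * X)) := by
                  rw [mul_assoc]
          · simp only [Matrix.mul_zero, Matrix.zero_mul, add_zero, zero_add]
            rw [← hlhk, Matrix.mul_inv_rev, Matrix.mul_inv_rev, hh1inv]
            rw [Matrix.transpose_mul, Matrix.transpose_mul]
            have : (!![0, 1; 1, 0] : Matrix (Fin 2) (Fin 2) F)ᵀ = !![0, 1; 1, 0] := by
              ext i j; fin_cases i <;> fin_cases j <;> simp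
            rw [this, mul_assoc]
    · -- union ⊆ P4
      rintro m (⟨a, ha, b, hb, rfl⟩ | ⟨a, ha, b, hb, rfl⟩)
      · exact P4_mul_s13 F (by rw [mul_one]; exact ha.2) (Spsi_subset_P4 F hb)
      · exact P4_mul_s13 F (P4_mul_s13 F ha.2 (tau1_mem_P4 F)) (Spsi_subset_P4 F hb)
  · -- disjointness
    rw [Set.disjoint_left]
    rintro m ⟨a, ha, b, hb, rfl⟩ ⟨a', ha', b', hb', heq⟩
    obtain ⟨w, Xa, hwu, -, hae, hw01⟩ := D1_elim F ha
    obtain ⟨kb, Xb, ⟨ab, db, yb, hab, hdb, hkb⟩, -, -, hbe⟩ := hb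
    obtain ⟨w', Xa', hwu', -, hae', hw01'⟩ := D1_elim F ha'
    obtain ⟨kb', Xb', ⟨ab', db', yb', hab', hdb', hkb'⟩, -, -, hbe'⟩ := hb'
    have hw00' : w' 0 0 ≠ 0 := by
      have hdet : IsUnit w'.det := (Matrix.isUnit_iff_isUnit_det w').mp hwu'
      intro h
      rw [Matrix.det_fin_two, hw01', h] at hdet
      simp at hdet
    have e := congrFun (congrFun heq (Sum.inl 0)) (Sum.inl 1)
    rw [mul_one, hae, hbe, hae', hbe', tau1, Matrix.fromBlocks_multiply,
      Matrix.fromBlocks_multiply, Matrix.fromBlocks_multiply] at e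
    rw [Matrix.fromBlocks_apply₁₁, Matrix.fromBlocks_apply₁₁] at e
    simp [Matrix.mul_apply, Fin.sum_univ_two, hw01, hkb, hw01', hkb'] at e
    rcases e with h | h
    · exact hw00' h
    · exact hdb' h
end
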